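/- arXiv:2011.10128 — 5 statements merged into one kernel-verified Lean document; each statement's English description precedes it below -/
import Mathlib

section
/- The birational R-matrix is an involution: for any two vectors a, b in (ℝ_{>0})^n, applying the map η twice returns (a, b). That is, if η(a,b) = (b', a') with a'_i = a_{i-1} κ_{i-1}(a,b)/κ_i(a,b) and b'_i = b_{i+1} κ_{i+1}(a,b)/κ_i(a,b), then η(b', a') = (a, b). -/
open Finset

noncomputable section BirationalR

/-- A vector of reals with cyclically indexed coordinates (upper index mod `n`). -/
abbrev Vec (n : ℕ) := ZMod n → ℝ

/-- `κ_r(a,b) = Σ_{j=r}^{r+n-1} (Π_{k=r+1}^{j} b_k)(Π_{k=j+1}^{r+n-1} a_k)`, indices mod `n`. -/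
def kappaF (n : ℕ) (r : ZMod n) (a b : Vec n) : ℝ :=
  ∑ d ∈ Finset.range n,
    (∏ t ∈ Finset.range d, b (r + 1 + (t : ℕ))) *
      ∏ t ∈ Finset.range (n - 1 - d), a (r + 1 + (d : ℕ) + (t : ℕ))

/-- First component `b'` of the birational R-matrix `η(a,b) = (b',a')`:
`b'_i = b_{i+1} κ_{i+1}(a,b)/κ_i(a,b)`. -/
def etaB (n : ℕ) (a b : Vec n) : Vec n :=
  fun i => b (i + 1) * kappaF n (i + 1) a b / kappaF n i a b

/-- Second component `a'` of `η(a,b) = (b',a')`: `a'_i = a_{i-1} κ_{i-1}(a,b)/κ_i(a,b)`. -/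
def etaA (n : ℕ) (a b : Vec n) : Vec n :=
  fun i => a (i - 1) * kappaF n (i - 1) a b / kappaF n i a b

/-- `η` applied to positions `(p, p+1)` of a tuple of vectors. -/
def etaAt (n : ℕ) (p : ℕ) (X : ℕ → Vec n) : ℕ → Vec n :=
  fun q => if q = p then etaB n (X p) (X (p + 1))
    else if q = p + 1 then etaA n (X p) (X (p + 1)) else X q

/-- Action of the word `s_{w₁} s_{w₂} ⋯ s_{wₗ}` (rightmost acts first). -/
def applyWord (n : ℕ) (w : List ℕ) (X : ℕ → Vec n) : ℕ → Vec n :=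
  w.foldr (etaAt n) X

/-- The tuple `(x_i, x_{i+1}, …, x_j)` as a list. -/
def seg {n : ℕ} (x : ℕ → Vec n) (i j : ℕ) : List (Vec n) :=
  (List.range (j + 1 - i)).map fun t => x (i + t)

/-- `τ_k^{(r)}(x_1,…,x_m)`: sum over weakly increasing `i_1 ≤ … ≤ i_k`, no index used
more than `n-1` times, of `x_{i_1}^{(r)} x_{i_2}^{(r-1)} ⋯ x_{i_k}^{(r-k+1)}`.
Encoded via multiplicity functions; `τ = 0` for negative `k`. -/
def tauF (n : ℕ) (r : ZMod n) (k : ℤ) (x : List (Vec n)) : ℝ :=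
  if 0 ≤ k then
    ∑ c ∈ (Fintype.piFinset fun _ : Fin x.length => Finset.range n).filter
        (fun c => ∑ i, c i = k.toNat),
      ∏ i : Fin x.length, ∏ β ∈ Finset.range (c i),
        x.get i (r - (∑ i' ∈ Finset.univ.filter (fun i' => i' < i), c i' : ℕ) - (β : ℕ))
  else 0

/-- `σ_k^{(r)}(x_1,…,x_m) = Σ_{t=0}^{k} x_1^{(r)} ⋯ x_1^{(r-t+1)} τ_{k-t}^{(r-t)}(x_2,…,x_m)`. -/
def sigmaF (n : ℕ) (r : ZMod n) (k : ℕ) : List (Vec n) → ℝ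
  | [] => if k = 0 then 1 else 0
  | y :: rest =>
      ∑ t ∈ Finset.range (k + 1),
        (∏ β ∈ Finset.range t, y (r - (β : ℕ))) * tauF n (r - (t : ℕ)) ((k : ℤ) - (t : ℤ)) rest

/-- `σ̄_k^{(r)}(x_1,…,x_m) = Σ_{t=0}^{k} τ_{k-t}^{(r)}(x_1,…,x_{m-1}) x_m^{(r-k+t)} ⋯ x_m^{(r-k+1)}`. -/
def sigmaBarF (n : ℕ) (r : ZMod n) (k : ℕ) : List (Vec n) → ℝ
  | [] => if k = 0 then 1 else 0
  | y :: rest =>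
      ∑ t ∈ Finset.range (k + 1),
        tauF n r ((k : ℤ) - (t : ℤ)) ((y :: rest).dropLast) *
          ∏ β ∈ Finset.range t,
            (y :: rest).getLast (List.cons_ne_nil y rest) (r - (k : ℕ) + 1 + (β : ℕ))

/-- `Ω_k^{(r)}(x_i,…,x_j) = Σ_{ℓ=0}^{n-1} σ^{(r)}_{(n-1)(k-i)+ℓ}(x_i,…,x_k)
σ̄^{(r+k-i-ℓ)}_{(n-1)(j-k)-ℓ}(x_{k+1},…,x_j)`. -/
def OmegaF (n : ℕ) (r : ZMod n) (k i j : ℕ) (x : ℕ → Vec n) : ℝ :=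
  ∑ ℓ ∈ Finset.range n,
    sigmaF n r ((n - 1) * (k - i) + ℓ) (seg x i k) *
      sigmaBarF n (r + (k : ℕ) - (i : ℕ) - (ℓ : ℕ)) ((n - 1) * (j - k) - ℓ) (seg x (k + 1) j)

/-- `P_k^{(r)}(x_i,…,x_j) = Σ_{t=0}^{k} (Π_{s=0}^{t-1} x_i^{(r-s)})
σ_{(n-1)(j-i-1)}^{(r-t)}(x_i,…,x_{j-1}) (Π_{s=0}^{k-t-1} x_j^{(r-t+j-i-1-s)})`. -/
def PF (n : ℕ) (r : ZMod n) (k i j : ℕ) (x : ℕ → Vec n) : ℝ :=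
  ∑ t ∈ Finset.range (k + 1),
    (∏ s ∈ Finset.range t, x i (r - (s : ℕ))) *
      sigmaF n (r - (t : ℕ)) ((n - 1) * (j - i - 1)) (seg x i (j - 1)) *
      ∏ s ∈ Finset.range (k - t), x j (r - (t : ℕ) + (j : ℕ) - (i : ℕ) - 1 - (s : ℕ))

end BirationalR

/-!
The proof rests on the invariance `κ_r(b', a') = κ_r(a, b)`: granted it, the defining relations
`a'_{i+1} κ_{i+1} = a_i κ_i` and `b'_i κ_i = b_{i+1} κ_{i+1}` of `η` hold verbatim for `η(b', a')`
and return `(a, b)`.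

By these relations the products of the `a'_j` and `b'_j` along an arc telescope, so the summand
`d` of `κ_r(b', a')` is `κ_r² α_d C_{d+1} / (κ_{r+d} κ_{r+d+1})`, where `α_d = a_r ⋯ a_{r+d-1}` and
`C_m = b_{r+m+1} ⋯ b_{r+n}`. The sum telescopes because of the cyclic identity
`a_s κ_s - b_{s+1} κ_{s+1} = ∏ a - ∏ b`: its primitive is `κ_r U_m C_m / κ_{r+m}`
(`kappaEtaPrimitive`), where `U_m` (`kappaPartial`) is `κ_r` truncated to an arc of length `m`,
so that `U_n = κ_r`. Working with `U_m`, rather than with `α_m κ_r / κ_{r+m}` and a division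
by `∏ a - ∏ b`, keeps the argument valid when `∏ a = ∏ b`.
-/

section BirationalRInvolution

variable {n : ℕ}

def arcProd (x : Vec n) (s : ZMod n) (k : ℕ) : ℝ :=
  ∏ t ∈ range k, x (s + t)

def kappaPartial (m : ℕ) (r : ZMod n) (a b : Vec n) : ℝ :=
  ∑ e ∈ range m, arcProd b (r + 1) e * arcProd a (r + 1 + e) (m - 1 - e)

noncomputable def kappaEtaPrimitive (r : ZMod n) (a b : Vec n) (m : ℕ) : ℝ :=
  kappaF n r a b * kappaPartial m r a b * arcProd b (r + 1 + m) (n - m) / kappaF n (r + m) a b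

section arcProd

variable (x : Vec n) (s : ZMod n)

@[simp] lemma arcProd_zero : arcProd x s 0 = 1 := prod_range_zero _

lemma arcProd_succ (k : ℕ) : arcProd x s (k + 1) = arcProd x s k * x (s + k) :=
  prod_range_succ _ _

lemma arcProd_succ' (k : ℕ) : arcProd x s (k + 1) = x s * arcProd x (s + 1) k := by
  rw [arcProd, prod_range_succ', mul_comm, arcProd]
  simp only [Nat.cast_succ, Nat.cast_zero, add_zero, add_assoc, add_comm (1 : ZMod n)]

lemma arcProd_comp_add_one (k : ℕ) : arcProd (fun j => x (j + 1)) s k = arcProd x (s + 1) k := by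
  simp only [arcProd, add_right_comm]

lemma arcProd_eq_prod_univ [NeZero n] : arcProd x s n = ∏ i, x i :=
  prod_nbij' (fun t => s + t) (fun i => (i - s).val) (by simp) (by simp [ZMod.val_lt])
    (fun t ht => by rw [add_sub_cancel_left, ZMod.val_natCast_of_lt (mem_range.mp ht)])
    (by simp) (by simp)

lemma arcProd_mul_eq_of_mul_eq {y g : Vec n} (h : ∀ j, x j * g (j + 1) = y j * g j) (k : ℕ) :
    arcProd x s k * g (s + k) = arcProd y s k * g s := by
  induction k with
  | zero => simp
  | succ k ih =>
    rw [arcProd_succ, arcProd_succ, Nat.cast_succ, ← add_assoc]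
    linear_combination arcProd x s k * h (s + k) + y (s + k) * ih

end arcProd

section kappa

variable (a b : Vec n) (r : ZMod n)

lemma kappaF_eq_kappaPartial : kappaF n r a b = kappaPartial n r a b := rfl

lemma kappaPartial_zero : kappaPartial 0 r a b = 0 := sum_range_zero _

lemma kappaPartial_succ (m : ℕ) :
    kappaPartial (m + 1) r a b = a (r + m) * kappaPartial m r a b + arcProd b (r + 1) m := by
  rw [kappaPartial, sum_range_succ, kappaPartial, mul_sum]
  simp only [Nat.add_sub_cancel, Nat.sub_self, arcProd_zero, mul_one]
  congr 1
  refine sum_congr rfl fun e he => ?_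
  obtain ⟨k, rfl⟩ : ∃ k, m = e + 1 + k := ⟨m - 1 - e, by have := mem_range.mp he; omega⟩
  rw [show e + 1 + k - e = k + 1 by omega, show e + 1 + k - 1 - e = k by omega, arcProd_succ]
  push_cast
  ring_nf

lemma kappaPartial_succ' (m : ℕ) :
    kappaPartial (m + 1) r a b =
      arcProd a (r + 1) m + b (r + 1) * kappaPartial m (r + 1) a b := by
  rw [kappaPartial, sum_range_succ', kappaPartial, mul_sum, add_comm]
  simp only [Nat.add_sub_cancel, Nat.sub_zero, arcProd_zero, one_mul, Nat.cast_zero, add_zero]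
  congr 1
  refine sum_congr rfl fun e _ => ?_
  rw [arcProd_succ', show m - (e + 1) = m - 1 - e by omega]
  push_cast
  ring_nf

lemma kappaF_pos (hn : 1 ≤ n) (ha : ∀ i, 0 < a i) (hb : ∀ i, 0 < b i) : 0 < kappaF n r a b :=
  sum_pos (fun _ _ => mul_pos (prod_pos fun _ _ => hb _) (prod_pos fun _ _ => ha _))
    (nonempty_range_iff.mpr (by omega))

lemma mul_kappaF_sub_mul_kappaF [NeZero n] :
    a r * kappaF n r a b - b (r + 1) * kappaF n (r + 1) a b = ∏ i, a i - ∏ i, b i := by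
  obtain ⟨m, rfl⟩ := Nat.exists_eq_add_one.mpr (Nat.pos_of_neZero n)
  have hcycle : r + 1 + (m : ZMod (m + 1)) = r := by
    rw [add_assoc, add_comm 1, ← Nat.cast_succ, ZMod.natCast_self, add_zero]
  rw [kappaF_eq_kappaPartial, kappaF_eq_kappaPartial, kappaPartial_succ',
    kappaPartial_succ _ _ (r + 1), hcycle, ← arcProd_eq_prod_univ a r,
    ← arcProd_eq_prod_univ b (r + 1), arcProd_succ' a, arcProd_succ' b]
  ring

lemma prod_sub_prod_mul_kappaPartial_add [NeZero n] (m : ℕ) :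
    (∏ i, a i - ∏ i, b i) * kappaPartial m r a b + arcProd b (r + 1) m * kappaF n (r + m) a b =
      arcProd a r m * kappaF n r a b := by
  induction m with
  | zero => simp [kappaPartial_zero]
  | succ m ih =>
    rw [kappaPartial_succ, arcProd_succ, arcProd_succ, Nat.cast_succ, ← add_assoc,
      add_right_comm r 1]
    linear_combination a (r + m) * ih - arcProd b (r + 1) m * mul_kappaF_sub_mul_kappaF a b (r + m)

lemma kappaEtaPrimitive_zero : kappaEtaPrimitive r a b 0 = 0 := by
  simp [kappaEtaPrimitive, kappaPartial_zero]

end kappa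

section eta

variable {a b : Vec n} (hK : ∀ s, kappaF n s a b ≠ 0)
include hK

lemma etaA_mul_kappaF (j : ZMod n) :
    etaA n a b (j + 1) * kappaF n (j + 1) a b = a j * kappaF n j a b := by
  rw [etaA, add_sub_cancel_right, div_mul_cancel₀ _ (hK _)]

lemma etaB_mul_kappaF (j : ZMod n) :
    etaB n a b j * kappaF n j a b = b (j + 1) * kappaF n (j + 1) a b :=
  div_mul_cancel₀ _ (hK _)

lemma arcProd_etaA_mul_kappaF (r : ZMod n) (k : ℕ) :
    arcProd (etaA n a b) (r + 1) k * kappaF n (r + k) a b = arcProd a r k * kappaF n r a b := by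
  rw [← arcProd_comp_add_one]
  exact arcProd_mul_eq_of_mul_eq (fun j => etaA n a b (j + 1)) r (g := fun j => kappaF n j a b)
    (etaA_mul_kappaF hK) k

lemma arcProd_etaB_mul_kappaF (s : ZMod n) (k : ℕ) :
    arcProd (etaB n a b) s k * kappaF n s a b = arcProd b (s + 1) k * kappaF n (s + k) a b := by
  rw [← arcProd_comp_add_one]
  exact (arcProd_mul_eq_of_mul_eq (fun j => b (j + 1)) s (g := fun j => kappaF n j a b)
    (fun j => (etaB_mul_kappaF hK j).symm) k).symm

lemma kappaEtaPrimitive_self (r : ZMod n) : kappaEtaPrimitive r a b n = kappaF n r a b := by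
  simp only [kappaEtaPrimitive, ← kappaF_eq_kappaPartial, ZMod.natCast_self, add_zero,
    Nat.sub_self, arcProd_zero, mul_one]
  exact mul_div_cancel_right₀ _ (hK r)

lemma kappaEtaPrimitive_succ_sub [NeZero n] (r : ZMod n) {d : ℕ} (hd : d < n) :
    kappaEtaPrimitive r a b (d + 1) - kappaEtaPrimitive r a b d =
      arcProd (etaA n a b) (r + 1) d * arcProd (etaB n a b) (r + 1 + d) (n - 1 - d) := by
  have hcycle : r + 1 + (d : ZMod n) + ((n - 1 - d : ℕ) : ZMod n) = r := by
    have h : ((1 + d + (n - 1 - d) : ℕ) : ZMod n) = 0 := by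
      rw [show 1 + d + (n - 1 - d) = n by omega, ZMod.natCast_self]
    push_cast at h
    linear_combination h
  have hPa := arcProd_etaA_mul_kappaF hK r d
  have hPb := arcProd_etaB_mul_kappaF hK (r + 1 + d) (n - 1 - d)
  rw [hcycle] at hPb
  have hstep : kappaPartial (d + 1) r a b * kappaF n (r + d) a b -
      b (r + 1 + d) * kappaPartial d r a b * kappaF n (r + 1 + d) a b =
        arcProd a r d * kappaF n r a b := by
    rw [kappaPartial_succ, add_right_comm r 1]
    linear_combination prod_sub_prod_mul_kappaPartial_add a b r d +
      kappaPartial d r a b * mul_kappaF_sub_mul_kappaF a b (r + d)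
  have hC : arcProd b (r + 1 + d) (n - d) =
      b (r + 1 + d) * arcProd b (r + 1 + d + 1) (n - 1 - d) := by
    rw [show n - d = n - 1 - d + 1 by omega, arcProd_succ']
  simp only [kappaEtaPrimitive, hC, Nat.cast_succ, ← add_assoc,
    show n - (d + 1) = n - 1 - d by omega]
  rw [add_right_comm r (d : ZMod n) 1, div_sub_div _ _ (hK _) (hK _),
    div_eq_iff (mul_ne_zero (hK _) (hK _))]
  set Pb := arcProd (etaB n a b) (r + 1 + d) (n - 1 - d)
  set C := arcProd b (r + 1 + d + 1) (n - 1 - d)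
  linear_combination -(Pb * kappaF n (r + 1 + d) a b) * hPa - arcProd a r d * kappaF n r a b * hPb +
    kappaF n r a b * C * hstep

lemma kappaF_etaB_etaA [NeZero n] (r : ZMod n) :
    kappaF n r (etaB n a b) (etaA n a b) = kappaF n r a b := by
  calc kappaF n r (etaB n a b) (etaA n a b)
      = ∑ d ∈ range n, (kappaEtaPrimitive r a b (d + 1) - kappaEtaPrimitive r a b d) :=
        (sum_congr rfl fun d hd => kappaEtaPrimitive_succ_sub hK r (mem_range.mp hd)).symm
    _ = kappaF n r a b := by
      rw [sum_range_sub, kappaEtaPrimitive_zero, sub_zero, kappaEtaPrimitive_self hK]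

end eta

end BirationalRInvolution

/-- the birational R-matrix `η` is an involution: `η(η(a,b)) = (a,b)`. -/
theorem eta_involution (n : ℕ) (hn : 1 ≤ n) (a b : Vec n)
    (ha : ∀ i, 0 < a i) (hb : ∀ i, 0 < b i) :
    etaB n (etaB n a b) (etaA n a b) = a ∧ etaA n (etaB n a b) (etaA n a b) = b := by
  have : NeZero n := ⟨by omega⟩
  have hK : ∀ s, kappaF n s a b ≠ 0 := fun s => (kappaF_pos a b s hn ha hb).ne'
  constructor <;> funext i
  · rw [etaB, kappaF_etaB_etaA hK, kappaF_etaB_etaA hK, etaA_mul_kappaF hK,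
      mul_div_cancel_right₀ _ (hK i)]
  · rw [etaA, kappaF_etaB_etaA hK, kappaF_etaB_etaA hK, etaB_mul_kappaF hK, sub_add_cancel,
      mul_div_cancel_right₀ _ (hK i)]
end

section
/- The birational R-matrix satisfies the braid relation: for three vectors a, b, c in (ℝ_{>0})^n, letting η_1 apply η to the first two components and η_2 to the last two, we have η_1 η_2 η_1 (a,b,c) = η_2 η_1 η_2 (a,b,c). -/
open Finset

/-- `η` applied to the first two components of a triple. -/
noncomputable def eta1 (n : ℕ) (X : Vec n × Vec n × Vec n) : Vec n × Vec n × Vec n :=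
  (etaB n X.1 X.2.1, etaA n X.1 X.2.1, X.2.2)

/-- `η` applied to the last two components of a triple. -/
noncomputable def eta2 (n : ℕ) (X : Vec n × Vec n × Vec n) : Vec n × Vec n × Vec n :=
  (X.1, etaB n X.2.1 X.2.2, etaA n X.2.1 X.2.2)

/-!
With `S` the shift `(S f)_i = f_{i+1}`, the map `η(a, b) = (b', a')` is the refactorization
`(1 + a S)(1 + b S) = (1 + b' S)(1 + a' S)` that also swaps the products of the coordinates
(`∏ b' = ∏ b`, `∏ a' = ∏ a`). Hence both sides of the braid relation factor the same operator
`(1 + a S)(1 + b S)(1 + c S)` into three factors with coordinate products `∏ c, ∏ b, ∏ a`.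
If `∏ b ≠ ∏ c` such a factorization is unique: for two of them, `(x, y, z)` and `(u, v, w)`,
`d = u - x` satisfies a second-order linear recurrence which splits into two first-order ones with positive coefficients;
going once around the cycle `ℤ/n` and using `∏ y ≠ ∏ u` shows that `d` has a constant sign, so
`∏ x = ∏ u` forces `d = 0`. Then `(y, z)` is pinned down by `y + z`, `y_i z_{i+1}` and `∏ y` through
the same sign argument.
If `∏ b = ∏ c`, then `η(b, c) = (b, c)` and the relation is immediate.
-/

theorem ZMod.forall_of_zero_of_add_one {n : ℕ} [NeZero n] {P : ZMod n → Prop} (h0 : P 0)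
    (hs : ∀ i, P i → P (i + 1)) (i : ZMod n) : P i := by
  rw [← ZMod.natCast_zmod_val i]
  induction i.val with
  | zero => simpa using h0
  | succ k ih => simpa using hs _ ih

theorem eq_of_le_of_prod_eq {ι : Type*} [Fintype ι] {x u : ι → ℝ} (hx : ∀ i, 0 < x i)
    (hle : x ≤ u) (h : ∏ i, x i = ∏ i, u i) : x = u := by
  by_contra hne
  obtain ⟨-, i, hi⟩ := Pi.lt_def.mp (hle.lt_of_ne hne)
  exact (prod_lt_prod (fun i _ => hx i) (fun i _ => hle i) ⟨i, mem_univ _, hi⟩).ne h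

theorem eq_of_le_or_le_of_prod_eq {ι : Type*} [Fintype ι] {x u : ι → ℝ} (hx : ∀ i, 0 < x i)
    (hu : ∀ i, 0 < u i) (hxu : x ≤ u ∨ u ≤ x) (h : ∏ i, x i = ∏ i, u i) : x = u :=
  hxu.elim (eq_of_le_of_prod_eq hx · h) fun hux => (eq_of_le_of_prod_eq hu hux h.symm).symm

theorem ZMod.prod_range_add_natCast {n : ℕ} [NeZero n] {M : Type*} [CommMonoid M]
    (f : ZMod n → M) (r : ZMod n) : ∏ t ∈ range n, f (r + t) = ∏ j, f j := by
  refine prod_nbij (fun t : ℕ => r + t) (fun _ _ => mem_univ _) ?_ ?_ fun _ _ => rfl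
  · intro s hs t ht hst
    simpa [ZMod.val_cast_of_lt (mem_range.mp hs), ZMod.val_cast_of_lt (mem_range.mp ht)]
      using congrArg ZMod.val (add_left_cancel hst)
  · intro j _
    exact ⟨(j - r).val, mem_range.mpr (ZMod.val_lt _), by simp⟩

namespace BirationalR

variable {n : ℕ} {a b : Vec n}

/-- The coefficients of `S`, `S²`, `S³` in `(1 + x S)(1 + y S)(1 + z S)` for `X = (x, y, z)`. -/
def tripleCoeffs (X : Vec n × Vec n × Vec n) (i : ZMod n) : ℝ × ℝ × ℝ :=
  (X.1 i + X.2.1 i + X.2.2 i,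
    X.1 i * X.2.1 (i + 1) + X.1 i * X.2.2 (i + 1) + X.2.1 i * X.2.2 (i + 1),
    X.1 i * X.2.1 (i + 1) * X.2.2 (i + 1 + 1))

theorem etaB_mul_etaA (hκ : ∀ i, kappaF n i a b ≠ 0) (i : ZMod n) :
    etaB n a b i * etaA n a b (i + 1) = a i * b (i + 1) := by
  have := hκ i
  have := hκ (i + 1)
  rw [etaB, etaA, add_sub_cancel_right]
  field_simp

variable [NeZero n]

theorem mul_kappaF_sub_mul_kappaF (a b : Vec n) (r : ZMod n) :
    a r * kappaF n r a b - b (r + 1) * kappaF n (r + 1) a b = ∏ j, a j - ∏ j, b j := by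
  -- `F d` is the `d`-th summand of `a r * κ_r`, and `F (d + 1)` that of `b (r + 1) * κ_{r + 1}`.
  set F : ℕ → ℝ := fun d =>
    (∏ t ∈ range d, b (r + 1 + t)) * ∏ t ∈ range (n - d), a (r + 1 + d + t) with hF
  have hleft : a r * kappaF n r a b = ∑ d ∈ range n, F d := by
    rw [kappaF, mul_sum]
    refine sum_congr rfl fun d hd => ?_
    have hdn : n - d = n - 1 - d + 1 := by have := mem_range.mp hd; omega
    have hwrap : r + 1 + d + ((n - 1 - d : ℕ) : ZMod n) = r := by
      have : ((1 + d + (n - 1 - d) : ℕ) : ZMod n) = 0 := by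
        rw [← ZMod.natCast_self n]
        congr 1; have := mem_range.mp hd; omega
      push_cast at this
      linear_combination this
    simp only [hF]
    rw [hdn, prod_range_succ, hwrap]
    ring
  have hright : b (r + 1) * kappaF n (r + 1) a b = ∑ d ∈ range n, F (d + 1) := by
    rw [kappaF, mul_sum]
    refine sum_congr rfl fun d _ => ?_
    simp only [hF]
    rw [prod_range_succ', Nat.sub_sub]
    simp only [Nat.cast_add, Nat.cast_one, Nat.cast_zero, add_zero]
    ring_nf
  rw [hleft, hright, ← sum_sub_distrib, sum_range_sub' F n]
  simp [hF, ZMod.prod_range_add_natCast]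

theorem kappaF_pos (ha : ∀ i, 0 < a i) (hb : ∀ i, 0 < b i) (r : ZMod n) :
    0 < kappaF n r a b :=
  sum_pos (fun _ _ => mul_pos (prod_pos fun _ _ => hb _) (prod_pos fun _ _ => ha _))
    (nonempty_range_iff.mpr (NeZero.ne n))

theorem etaB_eq {i : ZMod n} (hκ : kappaF n i a b ≠ 0) :
    etaB n a b i = a i - (∏ j, a j - ∏ j, b j) / kappaF n i a b := by
  rw [etaB, ← mul_kappaF_sub_mul_kappaF a b i]
  field_simp
  ring

theorem etaA_eq {i : ZMod n} (hκ : kappaF n i a b ≠ 0) :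
    etaA n a b i = b i + (∏ j, a j - ∏ j, b j) / kappaF n i a b := by
  rw [etaA, ← mul_kappaF_sub_mul_kappaF a b (i - 1), sub_add_cancel]
  field_simp
  ring

theorem etaB_add_etaA (hκ : ∀ i, kappaF n i a b ≠ 0) (i : ZMod n) :
    etaB n a b i + etaA n a b i = a i + b i := by
  rw [etaB_eq (hκ i), etaA_eq (hκ i)]
  ring

theorem etaB_of_prod_eq (hκ : ∀ i, kappaF n i a b ≠ 0) (h : ∏ j, a j = ∏ j, b j) :
    etaB n a b = a := by
  ext i
  rw [etaB_eq (hκ i), h, sub_self, zero_div, sub_zero]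

theorem etaA_of_prod_eq (hκ : ∀ i, kappaF n i a b ≠ 0) (h : ∏ j, a j = ∏ j, b j) :
    etaA n a b = b := by
  ext i
  rw [etaA_eq (hκ i), h, sub_self, zero_div, add_zero]

theorem prod_etaB (hκ : ∀ i, kappaF n i a b ≠ 0) : ∏ i, etaB n a b i = ∏ i, b i := by
  simp only [etaB]
  rw [prod_div_distrib, prod_mul_distrib,
    Fintype.prod_equiv (Equiv.addRight 1) (fun j => b (j + 1)) b fun _ => rfl,
    Fintype.prod_equiv (Equiv.addRight 1) (fun j => kappaF n (j + 1) a b) (kappaF n · a b)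
      fun _ => rfl,
    mul_div_assoc, div_self (prod_ne_zero_iff.mpr fun i _ => hκ i), mul_one]

theorem prod_etaA (hκ : ∀ i, kappaF n i a b ≠ 0) : ∏ i, etaA n a b i = ∏ i, a i := by
  simp only [etaA]
  rw [prod_div_distrib, prod_mul_distrib,
    Fintype.prod_equiv (Equiv.subRight 1) (fun j => a (j - 1)) a fun _ => rfl,
    Fintype.prod_equiv (Equiv.subRight 1) (fun j => kappaF n (j - 1) a b) (kappaF n · a b)
      fun _ => rfl,
    mul_div_assoc, div_self (prod_ne_zero_iff.mpr fun i _ => hκ i), mul_one]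

theorem etaB_pos (ha : ∀ i, 0 < a i) (hb : ∀ i, 0 < b i) (i : ZMod n) : 0 < etaB n a b i :=
  div_pos (mul_pos (hb _) (kappaF_pos ha hb _)) (kappaF_pos ha hb _)

theorem etaA_pos (ha : ∀ i, 0 < a i) (hb : ∀ i, 0 < b i) (i : ZMod n) : 0 < etaA n a b i :=
  div_pos (mul_pos (ha _) (kappaF_pos ha hb _)) (kappaF_pos ha hb _)

theorem nonneg_of_mul_eq_mul {p q r : ZMod n → ℝ} (hp : ∀ i, 0 < p i) (hq : ∀ i, 0 < q i)
    (h : ∀ i, p i * r (i + 1) = q i * r i) (h0 : 0 ≤ r 0) : 0 ≤ r :=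
  ZMod.forall_of_zero_of_add_one h0 fun i hi =>
    (mul_nonneg_iff_of_pos_left (hp i)).mp (h i ▸ mul_nonneg (hq i).le hi)

theorem nonneg_or_nonpos_of_mul_eq_mul {p q r : ZMod n → ℝ} (hp : ∀ i, 0 < p i)
    (hq : ∀ i, 0 < q i) (h : ∀ i, p i * r (i + 1) = q i * r i) : 0 ≤ r ∨ r ≤ 0 := by
  rcases le_total 0 (r 0) with h0 | h0
  · exact Or.inl (nonneg_of_mul_eq_mul hp hq h h0)
  · refine Or.inr (neg_nonneg.mp (nonneg_of_mul_eq_mul hp hq (fun i => ?_) (by simpa)))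
    simp [h i]

theorem prod_mul_le_prod_mul {d y u : ZMod n → ℝ} (hy : ∀ i, 0 ≤ y i) (hu : ∀ i, 0 ≤ u i)
    (h : ∀ i, y (i + 1) * d i ≤ u i * d (i + 1)) (i : ZMod n) :
    (∏ j, y j) * d i ≤ (∏ j, u j) * d i := by
  have key : ∀ k : ℕ,
      (∏ t ∈ range k, y (i + 1 + t)) * d i ≤ (∏ t ∈ range k, u (i + t)) * d (i + k) := by
    intro k
    induction k with
    | zero => simp
    | succ k ih =>
      have hU : 0 ≤ ∏ t ∈ range k, u (i + t) := prod_nonneg fun _ _ => hu _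
      calc (∏ t ∈ range (k + 1), y (i + 1 + t)) * d i
          = y (i + k + 1) * ((∏ t ∈ range k, y (i + 1 + t)) * d i) := by
            rw [prod_range_succ]; ring_nf
        _ ≤ y (i + k + 1) * ((∏ t ∈ range k, u (i + t)) * d (i + k)) :=
            mul_le_mul_of_nonneg_left ih (hy _)
        _ = (∏ t ∈ range k, u (i + t)) * (y (i + k + 1) * d (i + k)) := by ring
        _ ≤ (∏ t ∈ range k, u (i + t)) * (u (i + k) * d (i + k + 1)) :=
            mul_le_mul_of_nonneg_left (h _) hU
        _ = (∏ t ∈ range (k + 1), u (i + t)) * d (i + (k + 1 : ℕ)) := by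
            rw [prod_range_succ]; push_cast; ring_nf
  simpa [ZMod.prod_range_add_natCast] using key n

theorem nonneg_or_nonpos_of_mul_le_mul {d y u : ZMod n → ℝ} (hy : ∀ i, 0 ≤ y i)
    (hu : ∀ i, 0 ≤ u i) (hyu : ∏ j, y j ≠ ∏ j, u j)
    (h : ∀ i, y (i + 1) * d i ≤ u i * d (i + 1)) : 0 ≤ d ∨ d ≤ 0 := by
  have key := prod_mul_le_prod_mul hy hu h
  rcases hyu.lt_or_gt with hlt | hgt
  · exact Or.inl fun i => show 0 ≤ d i by nlinarith [key i]
  · exact Or.inr fun i => show d i ≤ 0 by nlinarith [key i]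

theorem eq_of_add_eq_of_mul_eq {y z v w : Vec n} (hy : ∀ i, 0 < y i) (hv : ∀ i, 0 < v i)
    (hw : ∀ i, 0 < w i) (hadd : ∀ i, y i + z i = v i + w i)
    (hmul : ∀ i, y i * z (i + 1) = v i * w (i + 1)) (hprod : ∏ i, y i = ∏ i, v i) :
    y = v ∧ z = w := by
  have hrec : ∀ i, y i * (v - y) (i + 1) = w (i + 1) * (v - y) i := fun i => by
    simp only [Pi.sub_apply]
    linear_combination hmul i - y i * hadd (i + 1)
  have hyv : y = v := eq_of_le_or_le_of_prod_eq hy hv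
    ((nonneg_or_nonpos_of_mul_eq_mul hy (fun i => hw (i + 1)) hrec).imp sub_nonneg.mp
      sub_nonpos.mp) hprod
  refine ⟨hyv, funext fun i => ?_⟩
  linarith [hadd i, congrFun hyv i]

theorem eq_of_tripleCoeffs_eq {x y z u v w : Vec n} (hx : ∀ i, 0 < x i) (hy : ∀ i, 0 < y i)
    (hz : ∀ i, 0 < z i) (hu : ∀ i, 0 < u i) (hv : ∀ i, 0 < v i) (hw : ∀ i, 0 < w i)
    (hcoeffs : tripleCoeffs (x, y, z) = tripleCoeffs (u, v, w)) (hxu : ∏ i, x i = ∏ i, u i)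
    (hyv : ∏ i, y i = ∏ i, v i) (hyu : ∏ i, y i ≠ ∏ i, u i) : (x, y, z) = (u, v, w) := by
  have hc i := congrFun hcoeffs i
  simp only [tripleCoeffs, Prod.mk.injEq] at hc
  set d := u - x with hd
  -- The second-order recurrence satisfied by `d` factors through
  -- `g i = u i * d (i + 1) - y (i + 1) * d i`.
  have hrec : ∀ i, u i * (u (i + 1) * d (i + 1 + 1) - y (i + 1 + 1) * d (i + 1))
      = z (i + 1 + 1) * (u i * d (i + 1) - y (i + 1) * d i) := fun i => by
    simp only [hd, Pi.sub_apply]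
    linear_combination u i * (hc (i + 1)).2.1 - u i * u (i + 1) * (hc (i + 1 + 1)).1 - (hc i).2.2
  have hsign : 0 ≤ d ∨ d ≤ 0 := by
    rcases nonneg_or_nonpos_of_mul_eq_mul (r := fun i => u i * d (i + 1) - y (i + 1) * d i)
      hu (fun i => hz (i + 1 + 1)) hrec with hg | hg
    · exact nonneg_or_nonpos_of_mul_le_mul (fun i => (hy i).le) (fun i => (hu i).le) hyu
        fun i => sub_nonneg.mp (hg i)
    · refine (nonneg_or_nonpos_of_mul_le_mul (d := -d) (fun i => (hy i).le) (fun i => (hu i).le)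
        hyu fun i => ?_).symm.imp neg_nonpos.mp neg_nonneg.mp
      simp only [Pi.neg_apply, mul_neg, neg_le_neg_iff]
      exact sub_nonpos.mp (hg i)
  obtain rfl : x = u := eq_of_le_or_le_of_prod_eq hx hu (hsign.imp sub_nonneg.mp sub_nonpos.mp) hxu
  obtain ⟨rfl, rfl⟩ := eq_of_add_eq_of_mul_eq (z := z) hy hv hw (fun i => by linarith [(hc i).1])
    (fun i => mul_left_cancel₀ (hx (i - 1)).ne' (by simpa [mul_assoc] using (hc (i - 1)).2.2)) hyv
  rfl

def PosTriple (X : Vec n × Vec n × Vec n) : Prop :=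
  (∀ i, 0 < X.1 i) ∧ (∀ i, 0 < X.2.1 i) ∧ ∀ i, 0 < X.2.2 i

def tripleProds (X : Vec n × Vec n × Vec n) : ℝ × ℝ × ℝ :=
  (∏ i, X.1 i, ∏ i, X.2.1 i, ∏ i, X.2.2 i)

variable {X : Vec n × Vec n × Vec n}

theorem PosTriple.eta1 (h : PosTriple X) : PosTriple (eta1 n X) :=
  ⟨etaB_pos h.1 h.2.1, etaA_pos h.1 h.2.1, h.2.2⟩

theorem PosTriple.eta2 (h : PosTriple X) : PosTriple (eta2 n X) :=
  ⟨h.1, etaB_pos h.2.1 h.2.2, etaA_pos h.2.1 h.2.2⟩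

theorem tripleCoeffs_eta1 (h : PosTriple X) : tripleCoeffs (eta1 n X) = tripleCoeffs X := by
  have hκ i := (kappaF_pos h.1 h.2.1 i).ne'
  have hadd := etaB_add_etaA hκ
  have hmul := etaB_mul_etaA hκ
  funext i
  simp only [tripleCoeffs, eta1, Prod.mk.injEq]
  exact ⟨by linear_combination hadd i, by linear_combination hmul i + X.2.2 (i + 1) * hadd i,
    by linear_combination X.2.2 (i + 1 + 1) * hmul i⟩

theorem tripleCoeffs_eta2 (h : PosTriple X) : tripleCoeffs (eta2 n X) = tripleCoeffs X := by
  have hκ i := (kappaF_pos h.2.1 h.2.2 i).ne'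
  have hadd := etaB_add_etaA hκ
  have hmul := etaB_mul_etaA hκ
  funext i
  simp only [tripleCoeffs, eta2, Prod.mk.injEq]
  exact ⟨by linear_combination hadd i, by linear_combination X.1 i * hadd (i + 1) + hmul i,
    by linear_combination X.1 i * hmul (i + 1)⟩

theorem tripleProds_eta1 (h : PosTriple X) :
    tripleProds (eta1 n X) = ((tripleProds X).2.1, (tripleProds X).1, (tripleProds X).2.2) := by
  have hκ i := (kappaF_pos h.1 h.2.1 i).ne'
  simp only [tripleProds, eta1, prod_etaB hκ, prod_etaA hκ]

theorem tripleProds_eta2 (h : PosTriple X) :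
    tripleProds (eta2 n X) = ((tripleProds X).1, (tripleProds X).2.2, (tripleProds X).2.1) := by
  have hκ i := (kappaF_pos h.2.1 h.2.2 i).ne'
  simp only [tripleProds, eta2, prod_etaB hκ, prod_etaA hκ]

theorem eta1_eq_self (h : PosTriple X) (hprod : ∏ i, X.1 i = ∏ i, X.2.1 i) : eta1 n X = X := by
  have hκ i := (kappaF_pos h.1 h.2.1 i).ne'
  simp only [eta1, etaB_of_prod_eq hκ hprod, etaA_of_prod_eq hκ hprod]

theorem eta2_eq_self (h : PosTriple X) (hprod : ∏ i, X.2.1 i = ∏ i, X.2.2 i) : eta2 n X = X := by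
  have hκ i := (kappaF_pos h.2.1 h.2.2 i).ne'
  simp only [eta2, etaB_of_prod_eq hκ hprod, etaA_of_prod_eq hκ hprod]

theorem eta_braid_of_prod_eq (h : PosTriple X) (hprod : ∏ i, X.2.1 i = ∏ i, X.2.2 i) :
    eta1 n (eta2 n (eta1 n X)) = eta2 n (eta1 n (eta2 n X)) := by
  have hprod' : ∏ i, (eta2 n (eta1 n X)).1 i = ∏ i, (eta2 n (eta1 n X)).2.1 i := by
    have := tripleProds_eta2 h.eta1
    rw [tripleProds_eta1 h] at this
    simp only [tripleProds, Prod.mk.injEq] at this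
    rw [this.1, this.2.1, hprod]
  rw [eta2_eq_self h hprod, eta1_eq_self h.eta1.eta2 hprod']

theorem eta_braid_of_prod_ne (h : PosTriple X) (hprod : ∏ i, X.2.1 i ≠ ∏ i, X.2.2 i) :
    eta1 n (eta2 n (eta1 n X)) = eta2 n (eta1 n (eta2 n X)) := by
  have hL := h.eta1.eta2.eta1
  have hR := h.eta2.eta1.eta2
  have hcoeffs : tripleCoeffs (eta1 n (eta2 n (eta1 n X)))
      = tripleCoeffs (eta2 n (eta1 n (eta2 n X))) := by
    rw [tripleCoeffs_eta1 h.eta1.eta2, tripleCoeffs_eta2 h.eta1, tripleCoeffs_eta1 h,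
      tripleCoeffs_eta2 h.eta2.eta1, tripleCoeffs_eta1 h.eta2, tripleCoeffs_eta2 h]
  have hLprods : tripleProds (eta1 n (eta2 n (eta1 n X)))
      = ((tripleProds X).2.2, (tripleProds X).2.1, (tripleProds X).1) := by
    rw [tripleProds_eta1 h.eta1.eta2, tripleProds_eta2 h.eta1, tripleProds_eta1 h]
  have hRprods : tripleProds (eta2 n (eta1 n (eta2 n X)))
      = ((tripleProds X).2.2, (tripleProds X).2.1, (tripleProds X).1) := by
    rw [tripleProds_eta2 h.eta2.eta1, tripleProds_eta1 h.eta2, tripleProds_eta2 h]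
  simp only [tripleProds, Prod.mk.injEq] at hLprods hRprods
  exact eq_of_tripleCoeffs_eq hL.1 hL.2.1 hL.2.2 hR.1 hR.2.1 hR.2.2 hcoeffs
    (hLprods.1.trans hRprods.1.symm) (hLprods.2.1.trans hRprods.2.1.symm)
    fun heq => hprod (hLprods.2.1.symm.trans (heq.trans hRprods.1))

end BirationalR

/-- the birational R-matrix satisfies the braid relation
`η₁ η₂ η₁ (a,b,c) = η₂ η₁ η₂ (a,b,c)`. -/
theorem eta_braid (n : ℕ) (hn : 1 ≤ n) (a b c : Vec n)
    (ha : ∀ i, 0 < a i) (hb : ∀ i, 0 < b i) (hc : ∀ i, 0 < c i) :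
    eta1 n (eta2 n (eta1 n (a, b, c))) = eta2 n (eta1 n (eta2 n (a, b, c))) := by
  have : NeZero n := ⟨by omega⟩
  by_cases hbc : ∏ i, b i = ∏ i, c i
  · exact BirationalR.eta_braid_of_prod_eq ⟨ha, hb, hc⟩ hbc
  · exact BirationalR.eta_braid_of_prod_ne ⟨ha, hb, hc⟩ hbc
end

section
/- Branching identity for σ: for m-tuples of vectors x_i, ..., x_j (j > i) in positive reals with n components indexed cyclically, σ_{(n-1)(j-i)}^{(r)}(x_i, ..., x_j) = Σ_{k=0}^{n-1} (Π_{t=0}^{k-1} x_i^{(r-t)}) σ_{(n-1)(j-i-1)}^{(r-k)}(x_i, ..., x_{j-1}) (Π_{s=0}^{n-k-2} x_j^{(r-k+j-i-1-s)}), where all upper indices are taken modulo n. -/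
open Finset

/-!
Write `(x_i, …, x_j) = (x_i, y, x_j)` with `y = (x_{i+1}, …, x_{j-1})` of length `m`. Expanding
`τ` along its last vector, `σ_K(x_i, y, x_j) = Σ_{d<n} σ_{K-d}(x_i, y) · (d factors of x_j)`.
Since `τ(y)` vanishes above degree `(n-1)m`, in `σ_{(n-1)m+k}(x_i, y)` the first `k` factors must
come from `x_i`, so it equals `x_i^{(r)} ⋯ x_i^{(r-k+1)} σ^{(r-k)}_{(n-1)m}(x_i, y)`. With
`K = (n-1)(m+1)` and `d = n-1-k` this is the branching identity; the upper indices of `x_j` agree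
because `n ≡ 0` modulo `n`.
-/

lemma Finset.sum_piFinset_fin_succ {M α : Type*} [AddCommMonoid M] {m : ℕ}
    (S : Fin (m + 1) → Finset α) (f : (Fin (m + 1) → α) → M) :
    ∑ c ∈ Fintype.piFinset S, f c =
      ∑ a ∈ S 0, ∑ c ∈ Fintype.piFinset (Fin.tail S), f (Fin.cons a c) := by
  have h := filter_piFinset_eq_map_consEquiv S (fun _ => True)
  simp only [filter_true] at h
  rw [h, sum_map, sum_product]
  rfl

lemma Fin.sum_filter_lt_succ_cons {M : Type*} [AddCommMonoid M] {m : ℕ} (a : M) (c : Fin m → M)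
    (i : Fin m) :
    ∑ i' ∈ univ.filter (· < i.succ), (Fin.cons a c : Fin (m + 1) → M) i' =
      a + ∑ i' ∈ univ.filter (· < i), c i' := by
  simp [sum_filter, Fin.sum_univ_succ, Fin.succ_pos, Fin.succ_lt_succ_iff]

noncomputable def tauMonomial (n : ℕ) (r : ZMod n) (L : List (Vec n)) (c : Fin L.length → ℕ) :
    ℝ :=
  ∏ i : Fin L.length, ∏ β ∈ range (c i),
    L.get i (r - (∑ i' ∈ univ.filter (fun i' => i' < i), c i' : ℕ) - (β : ℕ))

lemma tauMonomial_cons (n : ℕ) (r : ZMod n) (y : Vec n) (L : List (Vec n)) (t : ℕ)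
    (c : Fin L.length → ℕ) :
    tauMonomial n r (y :: L) (Fin.cons t c) =
      (∏ β ∈ range t, y (r - (β : ℕ))) * tauMonomial n (r - (t : ℕ)) L c := by
  refine (Fin.prod_univ_succ (n := L.length) _).trans ?_
  congr 1
  · simp only [Fin.cons_zero, Fin.not_lt_zero, filter_false, sum_empty, Nat.cast_zero, sub_zero]
    rfl
  · refine prod_congr rfl fun i _ => ?_
    rw [Fin.cons_succ]
    refine prod_congr rfl fun β _ => ?_
    -- `erw`: the index type `Fin (y :: L).length` is `Fin (L.length + 1)` only up to unfolding
    erw [Fin.sum_filter_lt_succ_cons]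
    rw [Nat.cast_add, sub_add_eq_sub_sub]
    rfl

lemma tauF_eq_sum_ite (n : ℕ) (r : ZMod n) (k : ℤ) (L : List (Vec n)) :
    tauF n r k L = ∑ c ∈ Fintype.piFinset (fun _ : Fin L.length => range n),
      if ((∑ i, c i : ℕ) : ℤ) = k then tauMonomial n r L c else 0 := by
  unfold tauF
  split_ifs with hk
  · rw [sum_filter]
    exact sum_congr rfl fun c _ => if_congr (by omega) rfl rfl
  · exact (sum_eq_zero fun c _ => if_neg (by omega)).symm

lemma tauF_nil (n : ℕ) (r : ZMod n) (k : ℤ) : tauF n r k [] = if k = 0 then 1 else 0 := by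
  simp [tauF_eq_sum_ite, tauMonomial, eq_comm]

lemma tauF_eq_zero_of_neg (n : ℕ) (r : ZMod n) {k : ℤ} (hk : k < 0) (L : List (Vec n)) :
    tauF n r k L = 0 := by
  simp [tauF, not_le.2 hk]

lemma tauF_eq_zero_of_lt (n : ℕ) (r : ZMod n) {k : ℤ} (L : List (Vec n))
    (hk : (((n - 1) * L.length : ℕ) : ℤ) < k) : tauF n r k L = 0 := by
  rw [tauF_eq_sum_ite]
  refine sum_eq_zero fun c hc => if_neg ?_
  have hc : ∀ i, c i ≤ n - 1 := fun i => by
    have := Fintype.mem_piFinset.1 hc i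
    rw [mem_range] at this
    omega
  have : ∑ i, c i ≤ (n - 1) * L.length := by
    simpa [mul_comm] using sum_le_sum fun i (_ : i ∈ univ) => hc i
  omega

lemma tauF_cons (n : ℕ) (r : ZMod n) (k : ℤ) (y : Vec n) (L : List (Vec n)) :
    tauF n r k (y :: L) = ∑ t ∈ range n,
      (∏ β ∈ range t, y (r - (β : ℕ))) * tauF n (r - (t : ℕ)) (k - (t : ℤ)) L := by
  rw [tauF_eq_sum_ite]
  refine (sum_piFinset_fin_succ (m := L.length) _ _).trans ?_
  simp_rw [tauF_eq_sum_ite, mul_sum]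
  refine sum_congr rfl fun t _ => sum_congr rfl fun c _ => ?_
  erw [Fin.sum_cons]
  rw [tauMonomial_cons, mul_ite, mul_zero]
  exact if_congr (by push_cast; omega) rfl rfl

lemma tauF_append_singleton (n : ℕ) (r : ZMod n) (k : ℤ) (L : List (Vec n)) (v : Vec n) :
    tauF n r k (L ++ [v]) = ∑ d ∈ range n,
      tauF n r (k - (d : ℤ)) L *
        ∏ β ∈ range d, v (r - (k : ZMod n) + (d : ℕ) - (β : ℕ)) := by
  induction L generalizing r k with
  | nil =>
    rw [List.nil_append, tauF_cons]
    refine sum_congr rfl fun d _ => ?_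
    simp only [tauF_nil, sub_eq_zero]
    split_ifs with hkd <;> simp [hkd]
  | cons y L ih =>
    simp_rw [List.cons_append, tauF_cons, ih, mul_sum, sum_mul]
    rw [sum_comm]
    refine sum_congr rfl fun d _ => sum_congr rfl fun t _ => ?_
    rw [sub_right_comm k, mul_assoc]
    push_cast
    ring_nf

lemma sigmaF_cons_append_singleton (n : ℕ) (r : ZMod n) {k : ℕ} (hk : n ≤ k + 1) (y : Vec n)
    (L : List (Vec n)) (v : Vec n) :
    sigmaF n r k ((y :: L) ++ [v]) = ∑ d ∈ range n,
      sigmaF n r (k - d) (y :: L) *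
        ∏ β ∈ range d, v (r - (k : ℕ) + (d : ℕ) - (β : ℕ)) := by
  simp only [List.cons_append, sigmaF, tauF_append_singleton, mul_sum]
  rw [sum_comm]
  refine sum_congr rfl fun d hd => ?_
  have hdk : d ≤ k := by rw [mem_range] at hd; omega
  calc ∑ t ∈ range (k + 1), (∏ β ∈ range t, y (r - (β : ℕ))) *
        (tauF n (r - (t : ℕ)) ((k : ℤ) - t - d) L *
          ∏ β ∈ range d,
            v (r - (t : ℕ) - (((k : ℤ) - t : ℤ) : ZMod n) + (d : ℕ) - (β : ℕ)))
      = ∑ t ∈ range (k + 1), (∏ β ∈ range t, y (r - (β : ℕ))) *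
          tauF n (r - (t : ℕ)) (((k - d : ℕ) : ℤ) - t) L *
          ∏ β ∈ range d, v (r - (k : ℕ) + (d : ℕ) - (β : ℕ)) := by
        refine sum_congr rfl fun t _ => ?_
        rw [Nat.cast_sub hdk, sub_right_comm, mul_assoc]
        congr 2
        refine prod_congr rfl fun β _ => congrArg v ?_
        push_cast
        ring
    _ = ∑ t ∈ range (k - d + 1), (∏ β ∈ range t, y (r - (β : ℕ))) *
          tauF n (r - (t : ℕ)) (((k - d : ℕ) : ℤ) - t) L *
          ∏ β ∈ range d, v (r - (k : ℕ) + (d : ℕ) - (β : ℕ)) := by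
        refine (sum_subset (range_subset_range.2 (by omega)) fun t _ ht => ?_).symm
        rw [mem_range] at ht
        rw [tauF_eq_zero_of_neg _ _ (by omega), mul_zero, zero_mul]
    _ = _ := (sum_mul ..).symm

lemma sigmaF_cons_length_mul_add (n : ℕ) (r : ZMod n) (y : Vec n) (L : List (Vec n)) (k : ℕ) :
    sigmaF n r ((n - 1) * L.length + k) (y :: L) =
      (∏ β ∈ range k, y (r - (β : ℕ))) *
        sigmaF n (r - (k : ℕ)) ((n - 1) * L.length) (y :: L) := by
  simp only [sigmaF]
  rw [show (n - 1) * L.length + k + 1 = k + ((n - 1) * L.length + 1) by ring, sum_range_add,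
    sum_eq_zero fun t ht => ?_, zero_add, mul_sum]
  · refine sum_congr rfl fun t _ => ?_
    rw [prod_range_add, mul_assoc]
    simp only [Nat.cast_add, sub_add_eq_sub_sub, add_sub_cancel_right]
  · rw [mem_range] at ht
    rw [tauF_eq_zero_of_lt _ _ _ (by push_cast; omega), mul_zero]

lemma seg_eq_cons {n : ℕ} (x : ℕ → Vec n) {i j : ℕ} (h : i ≤ j) :
    seg x i j = x i :: seg x (i + 1) j := by
  rw [seg, seg, show j + 1 - i = j + 1 - (i + 1) + 1 by omega, List.range_succ_eq_map]
  simp [Function.comp_def, add_assoc, add_comm 1]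

lemma seg_succ_eq_append {n : ℕ} (x : ℕ → Vec n) {i j : ℕ} (h : i ≤ j + 1) :
    seg x i (j + 1) = seg x i j ++ [x (j + 1)] := by
  rw [seg, seg, show j + 1 + 1 - i = j + 1 - i + 1 by omega, List.range_succ]
  simp [show i + (j + 1 - i) = j + 1 by omega]

@[simp]
lemma length_seg {n : ℕ} (x : ℕ → Vec n) (i j : ℕ) : (seg x i j).length = j + 1 - i := by
  simp [seg]

theorem sigma_branching_general (n : ℕ) (x : ℕ → Vec n)
    (i j : ℕ) (hij : i < j) (r : ZMod n) :
    sigmaF n r ((n - 1) * (j - i)) (seg x i j) =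
      ∑ k ∈ Finset.range n,
        (∏ t ∈ Finset.range k, x i (r - (t : ℕ))) *
          sigmaF n (r - (k : ℕ)) ((n - 1) * (j - i - 1)) (seg x i (j - 1)) *
          ∏ s ∈ Finset.range (n - k - 1),
            x j (r - (k : ℕ) + (j : ℕ) - (i : ℕ) - 1 - (s : ℕ)) := by
  obtain ⟨m, hm⟩ : ∃ m, j - i = m + 1 := ⟨j - i - 1, by omega⟩
  set mid := seg x (i + 1) (j - 1)
  have hmid : mid.length = m := by simp only [mid, length_seg]; omega
  have hseg : seg x i j = (x i :: mid) ++ [x j] := by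
    obtain ⟨j, rfl⟩ : ∃ j', j = j' + 1 := ⟨j - 1, by omega⟩
    rw [seg_eq_cons x hij.le, seg_succ_eq_append x hij]
    rfl
  rw [hseg, sigmaF_cons_append_singleton n r (by rw [hm, mul_add_one]; omega),
    seg_eq_cons x (by omega : i ≤ j - 1), ← sum_range_reflect]
  refine sum_congr rfl fun k hk => ?_
  rw [mem_range] at hk
  rw [show (n - 1) * (j - i) - (n - 1 - k) = (n - 1) * mid.length + k by
      rw [hm, hmid, mul_add_one]; omega,
    sigmaF_cons_length_mul_add, hmid, show j - i - 1 = m by omega,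
    show n - 1 - k = n - k - 1 by omega]
  congr 1
  refine prod_congr rfl fun s _ => congrArg (x j) ?_
  rw [Nat.sub_sub]
  push_cast [Nat.cast_sub hij.le, Nat.cast_sub (by omega : 1 ≤ n),
    Nat.cast_sub (by omega : k + 1 ≤ n)]
  linear_combination (1 - ((j : ZMod n) - i)) * ZMod.natCast_self n

/-- branching identity for `σ`. -/
theorem sigma_branching (n : ℕ) (hn : 2 ≤ n) (x : ℕ → Vec n)
    (hx : ∀ p r, 0 < x p r) (i j : ℕ) (hij : i < j) (r : ZMod n) :
    sigmaF n r ((n - 1) * (j - i)) (seg x i j) =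
      ∑ k ∈ Finset.range n,
        (∏ t ∈ Finset.range k, x i (r - (t : ℕ))) *
          sigmaF n (r - (k : ℕ)) ((n - 1) * (j - i - 1)) (seg x i (j - 1)) *
          ∏ s ∈ Finset.range (n - k - 1),
            x j (r - (k : ℕ) + (j : ℕ) - (i : ℕ) - 1 - (s : ℕ)) :=
  sigma_branching_general n x i j hij r
end

section
/- Splitting of τ into at most n-1 leading factors of the first variable: τ_{K}^{(r)}(x_k, x_{k+1}, ..., x_{j-1}) = Σ_{t=0}^{n-1} (Π_{β=1}^{t} x_k^{(r-β+1)}) τ_{K-t}^{(r-t)}(x_{k+1},...,x_{j-1}), where Π_{β=1}^{t} x_k^{(r-β+1)} is the product x_k^{(r)} x_k^{(r-1)} ⋯ x_k^{(r-t+1)}, for any K ≥ 0, with upper indices taken mod n. -/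
open Finset

lemma seg_cons {n : ℕ} (x : ℕ → Vec n) (k j : ℕ) (h : k < j) :
    seg x k (j - 1) = x k :: seg x (k + 1) (j - 1) := by
  unfold seg
  have h1 : j - 1 + 1 - k = (j - 1 - k) + 1 := by omega
  have h2 : j - 1 + 1 - (k + 1) = j - 1 - k := by omega
  rw [h1, h2, List.range_succ_eq_map]
  simp [List.map_map, Function.comp_def, Nat.add_comm, Nat.add_assoc, Nat.add_left_comm]

lemma presum_succ {m : ℕ} (c : Fin (m+1) → ℕ) (i : Fin m) :
    ∑ i' ∈ Finset.univ.filter (fun i' => i' < i.succ), c i'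
    = c 0 + ∑ i' ∈ Finset.univ.filter (fun i' => i' < i), c (i'.succ) := by
  rw [Finset.sum_filter, Finset.sum_filter, Fin.sum_univ_succ]
  simp [Fin.succ_lt_succ_iff, Fin.succ_pos]

lemma tau_cons (n : ℕ) (hn : 0 < n) (r : ZMod n) (K : ℕ) (y : Vec n) (l : List (Vec n)) :
    tauF n r (K : ℤ) (y :: l) = ∑ t ∈ Finset.range n,
      (∏ β ∈ Finset.range t, y (r - (β : ℕ))) *
        tauF n (r - (t : ℕ)) ((K : ℤ) - (t : ℤ)) l := by
  have hstep : ∀ t ∈ Finset.range n,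
      (∏ β ∈ Finset.range t, y (r - (β : ℕ))) * tauF n (r - (t : ℕ)) ((K : ℤ) - (t : ℤ)) l
      = ∑ c ∈ (Fintype.piFinset fun _ : Fin l.length => Finset.range n).filter
            (fun c => t + ∑ i, c i = K),
          (∏ β ∈ Finset.range t, y (r - (β : ℕ))) *
          ∏ i : Fin l.length, ∏ β ∈ Finset.range (c i),
            l.get i ((r - (t : ℕ)) - (∑ i' ∈ Finset.univ.filter (fun i' => i' < i), c i' : ℕ) - (β : ℕ)) := by
    intro t _
    by_cases htK : t ≤ K
    · rw [tauF, if_pos (by omega), Finset.mul_sum]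
      congr 1
      apply Finset.filter_congr
      intro c _
      have hT : ((K : ℤ) - (t : ℤ)).toNat = K - t := by omega
      rw [hT]
      constructor <;> intro h <;> omega
    · rw [tauF, if_neg (by omega), mul_zero]
      rw [Finset.filter_false_of_mem, Finset.sum_empty]
      intro c _
      intro h
      omega
  rw [Finset.sum_congr rfl hstep]
  rw [Finset.sum_sigma']
  rw [tauF, if_pos (by positivity)]
  simp only [List.length_cons, Int.toNat_natCast]
  refine Finset.sum_bij' (fun c _ => (⟨c 0, fun i => c i.succ⟩ :
      Σ _t : ℕ, Fin l.length → ℕ)) (fun p _ => Fin.cons p.1 p.2) ?hi ?hj ?left ?right ?h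
  case hi =>
    intro c hc
    simp only [Finset.mem_filter, Fintype.mem_piFinset, Finset.mem_range] at hc
    simp only [Finset.mem_sigma, Finset.mem_filter, Fintype.mem_piFinset, Finset.mem_range]
    refine ⟨hc.1 0, fun i => hc.1 i.succ, ?_⟩
    rw [← hc.2, Fin.sum_univ_succ]
  case hj =>
    intro p hp
    simp only [Finset.mem_sigma, Finset.mem_filter, Fintype.mem_piFinset, Finset.mem_range] at hp
    simp only [Finset.mem_filter, Fintype.mem_piFinset, Finset.mem_range]
    refine ⟨fun i => ?_, ?_⟩
    · cases i using Fin.cases with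
      | zero => simpa using hp.1
      | succ i => simpa using hp.2.1 i
    · rw [Fin.sum_univ_succ]
      simpa using hp.2.2
  case left =>
    intro c hc
    funext i
    cases i using Fin.cases with
    | zero => simp
    | succ i => simp
  case right =>
    intro p hp
    simp
  case h =>
    intro c hc
    rw [Fin.prod_univ_succ]
    congr 1
    · apply Finset.prod_congr rfl
      intro β _
      have hz : (Finset.univ.filter (fun i' : Fin (l.length + 1) => i' < 0)) = ∅ := by
        apply Finset.filter_false_of_mem
        intro i _
        exact fun h => (Fin.not_lt_zero _ h).elim
      rw [hz]
      simp [List.get]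
      rfl
    · apply Finset.prod_congr rfl
      intro i _
      apply Finset.prod_congr rfl
      intro β _
      have hg : (y :: l).get i.succ = l.get i := rfl
      rw [hg, presum_succ]
      congr 1
      push_cast
      ring

/-- splitting of `τ` according to the number of uses of the first
variable: `τ_K^{(r)}(x_k,…,x_{j-1}) = Σ_{t=0}^{n-1} x_k^{(r)} ⋯ x_k^{(r-t+1)}
τ_{K-t}^{(r-t)}(x_{k+1},…,x_{j-1})`. -/
theorem tau_split (n : ℕ) (hn : 2 ≤ n) (x : ℕ → Vec n) (hx : ∀ p r, 0 < x p r)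
    (k j : ℕ) (hkj : k < j) (K : ℕ) (r : ZMod n) :
    tauF n r (K : ℤ) (seg x k (j - 1)) =
      ∑ t ∈ Finset.range n,
        (∏ β ∈ Finset.range t, x k (r - (β : ℕ))) *
          tauF n (r - (t : ℕ)) ((K : ℤ) - (t : ℤ)) (seg x (k + 1) (j - 1)) := by
  rw [seg_cons x k j hkj]
  exact tau_cons n (by omega) r K (x k) (seg x (k + 1) (j - 1))
end

section
/- Expansion of P: P_{n-k}^{(r-j+i)}(x_i,...,x_j) = P_{n-k-1}^{(r-j+i)}(x_i,...,x_j) x_j^{(r+k)} + (Π_{t=0}^{n-k-1} x_i^{(r-j+i-t)}) σ_{(n-1)(j-i-1)}^{(r-j+i+k)}(x_i,...,x_{j-1}), for 1 ≤ k ≤ n-1, with upper indices mod n. -/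
open Finset

theorem PF_succ (n : ℕ) (r : ZMod n) (m i j : ℕ) (x : ℕ → Vec n) :
    PF n r (m + 1) i j x =
      PF n r m i j x * x j (r + (j : ℕ) - (i : ℕ) - 1 - (m : ℕ)) +
        (∏ s ∈ range (m + 1), x i (r - (s : ℕ))) *
          sigmaF n (r - ((m + 1 : ℕ) : ZMod n)) ((n - 1) * (j - i - 1)) (seg x i (j - 1)) := by
  unfold PF
  rw [sum_range_succ _ (m + 1), Nat.sub_self, prod_range_zero, mul_one, sum_mul]
  congr 1
  refine sum_congr rfl fun t ht => ?_
  have htm : t ≤ m := Nat.lt_succ_iff.mp (mem_range.mp ht)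
  have hlast : r - (t : ℕ) + (j : ℕ) - (i : ℕ) - 1 - ((m - t : ℕ) : ZMod n) =
      r + (j : ℕ) - (i : ℕ) - 1 - (m : ℕ) := by
    rw [Nat.cast_sub htm]; ring
  rw [Nat.sub_add_comm htm, prod_range_succ, hlast]
  ring

theorem P_expansion_general (n : ℕ) (hn : 2 ≤ n) (x : ℕ → Vec n)
    (i j : ℕ) (k : ℕ) (hk2 : k ≤ n - 1)
    (r : ZMod n) :
    PF n (r - (j : ℕ) + (i : ℕ)) (n - k) i j x =
      PF n (r - (j : ℕ) + (i : ℕ)) (n - k - 1) i j x * x j (r + (k : ℕ)) +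
        (∏ t ∈ Finset.range (n - k), x i (r - (j : ℕ) + (i : ℕ) - (t : ℕ))) *
          sigmaF n (r - (j : ℕ) + (i : ℕ) + (k : ℕ)) ((n - 1) * (j - i - 1))
            (seg x i (j - 1)) := by
  obtain ⟨m, hm⟩ : ∃ m, n - k = m + 1 := ⟨n - k - 1, by omega⟩
  have hneg : ((m + 1 : ℕ) : ZMod n) = -(k : ℕ) := by
    rw [eq_neg_iff_add_eq_zero, ← Nat.cast_add, ← hm, Nat.sub_add_cancel (by omega),
      ZMod.natCast_self]
  rw [hm, Nat.add_sub_cancel, PF_succ, hneg, sub_neg_eq_add]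
  congr 3
  push_cast at hneg
  linear_combination -hneg

/-- expansion of `P`:
`P_{n-k}^{(r-j+i)} = P_{n-k-1}^{(r-j+i)} x_j^{(r+k)} +
(Π_{t=0}^{n-k-1} x_i^{(r-j+i-t)}) σ_{(n-1)(j-i-1)}^{(r-j+i+k)}(x_i,…,x_{j-1})`. -/
theorem P_expansion (n : ℕ) (hn : 2 ≤ n) (x : ℕ → Vec n) (hx : ∀ p r, 0 < x p r)
    (i j : ℕ) (hi : 1 ≤ i) (hij : i < j) (k : ℕ) (hk1 : 1 ≤ k) (hk2 : k ≤ n - 1)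
    (r : ZMod n) :
    PF n (r - (j : ℕ) + (i : ℕ)) (n - k) i j x =
      PF n (r - (j : ℕ) + (i : ℕ)) (n - k - 1) i j x * x j (r + (k : ℕ)) +
        (∏ t ∈ Finset.range (n - k), x i (r - (j : ℕ) + (i : ℕ) - (t : ℕ))) *
          sigmaF n (r - (j : ℕ) + (i : ℕ) + (k : ℕ)) ((n - 1) * (j - i - 1))
            (seg x i (j - 1)) :=
  P_expansion_general n hn x i j k hk2 r
end
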